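/- Let τ' = bk(τ,γ) with v ∈ V_i as above, μ = Φ(τ), μ' = Φ(τ'). Then deg(μ'_{X_0∪X_i}) ≤ deg(μ_{X_0∪X_i}), and there exists a divisor ν of μ_{X_0∪X_i} with deg ν = deg(μ'_{X_0∪X_i}) and μ'_{X_0∪X_i} ⪰ ν in revlex order. -/

import Mathlib

/-!
A finite set `F ⊆ ℕ` is encoded by the gap counts of its elements: `φ(F)` is the multiset of the
nonzero numbers `#(range v \ F)`, `v ∈ F`. Revlex comparisons are read off from tail counts
`#{e ∈ p | x ≤ e}`: if `p` is dominated by `q` in every tail count then `p ⪰ q`, and a divisor of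
`μ` of given degree dominating `μ'` is obtained by keeping the largest variables of `μ`.

In block `i` of `v`, the swap either leaves the fill `fl(τ,i)` unchanged or moves `v` down to a
non-member; this lowers every gap count and can only lengthen the initial segment of the fill,
which is the width of window `i` in `V[τ]`. On `τ ∩ V[τ]`: in the `up` case window `i` is widened
and filled; in the `tail` case `w` is the first gap of `τ ∩ V[τ]` and gets filled. Either way the
degree does not grow. If moreover `μ'_{X_i} = μ_{X_i}`, the windows are unchanged and
`τ ∩ V[τ]` changes by adding its first gap, possibly removing a larger element, which again
lowers every gap count.
-/
open Finset

/-- The one-block map `φ` (0-based encoding of an ordered set in listing order; output is the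
multiset of 1-based variable indices). -/
def phiMap (τ : Finset ℕ) : Multiset ℕ :=
  ↑((((τ.sort (· ≤ ·)).zipIdx.map Prod.swap).map (fun p => p.2 - p.1)).filter (fun x => x ≠ 0))

/-- The "non-initial-segment" part `ρ(Y,W)` of the inverse map `ψ(Y,W)`, for an ambient
ordered set `W` whose `a`-subsets are matched with monomials. -/
def rhoMap (a : ℕ) (μ : Multiset ℕ) : Finset ℕ :=
  (((μ.sort (· ≤ ·)).zipIdx.map Prod.swap).map (fun p => p.2 + p.1 + (a - Multiset.card μ))).toFinset

/-- The one-block map `ψ(Y,W) = σ ∪ ρ`. -/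
def psiMap (a : ℕ) (μ : Multiset ℕ) : Finset ℕ :=
  Finset.range (a - Multiset.card μ) ∪ rhoMap a μ

/-- `fl(τ,i)`: the revlex-first `k`-subset of `range N` containing `s` (add the earliest
missing elements). -/
def fillF (s : Finset ℕ) (k N : ℕ) : Finset ℕ :=
  s ∪ ((((Finset.range N) \ s).sort (· ≤ ·)).take (k - s.card)).toFinset

/-- A facet of `Λ_d`, encoded blockwise: `τ i ⊆ V_i = range (n i)` with `|τ i| ≤ a i`
(for `i < m`) and `∑ |τ i| = d`. -/
def IsFacetT (m d : ℕ) (n a : ℕ → ℕ) (τ : ℕ → Finset ℕ) : Prop :=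
  (∀ i, i < m → τ i ⊆ Finset.range (n i)) ∧ (∀ i, i < m → (τ i).card ≤ a i) ∧
  (∀ i, m ≤ i → τ i = ∅) ∧ (∑ i ∈ Finset.range m, (τ i).card) = d

/-- `Φ_i(τ) = φ(V_i, X_i)(fl(τ,i))`. -/
def PhiBlock (a n : ℕ → ℕ) (τ : ℕ → Finset ℕ) (i : ℕ) : Multiset ℕ :=
  phiMap (fillF (τ i) (a i) (n i))

/-- `b i = a i - deg Φ_i(τ)`, the size of the block-`i` part of `V[τ]`. -/
def bfun (a n : ℕ → ℕ) (τ : ℕ → Finset ℕ) (i : ℕ) : ℕ :=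
  a i - Multiset.card (PhiBlock a n τ i)

/-- Offsets identifying `V[τ] = ⋃ᵢ (first `b i` elements of `V_i`)` with `range (∑ b)`. -/
def offF (b : ℕ → ℕ) (i : ℕ) : ℕ := ∑ t ∈ Finset.range i, b t

/-- `τ ∩ V[τ]`, as a subset of `range (∑ b)` via the order isomorphism. -/
def globF (m : ℕ) (b : ℕ → ℕ) (τ : ℕ → Finset ℕ) : Finset ℕ :=
  (Finset.range m).biUnion (fun i => ((τ i) ∩ Finset.range (b i)).image (fun j => offF b i + j))

/-- The full map `Φ`: index `0` gives the `X₀`-part `Φ₀(τ) = φ(V[τ],X₀)(τ ∩ V[τ])`, and index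
`i+1 ≤ m` gives the `X_i`-part `Φ_i(τ)`. -/
def PhiMapT (m : ℕ) (a n : ℕ → ℕ) (τ : ℕ → Finset ℕ) : ℕ → Multiset ℕ :=
  fun i => if i = 0 then phiMap (globF m (bfun a n τ) τ)
    else if i ≤ m then PhiBlock a n τ (i - 1) else 0

/-- Membership in `S_d(X,(∞,a))`, blockwise: `μ 0` is the `X₀`-part (`|X₀| = ∑ a - d`) and
`μ (i+1)` is the `X_i`-part (`|X_i| = n i - a i`, of degree at most `a i`). -/
def InST (m d : ℕ) (n a : ℕ → ℕ) (μ : ℕ → Multiset ℕ) : Prop :=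
  (∑ i ∈ Finset.range (m + 1), Multiset.card (μ i)) ≤ d ∧
  (∀ i, i < m → Multiset.card (μ (i + 1)) ≤ a i) ∧
  (∀ x ∈ μ 0, 1 ≤ x ∧ x ≤ (∑ i ∈ Finset.range m, a i) - d) ∧
  (∀ i, i < m → ∀ x ∈ μ (i + 1), 1 ≤ x ∧ x ≤ n i - a i) ∧
  (∀ i, m + 1 ≤ i → μ i = 0)

/-- The inverse map `Ψ`: `Ψ(μ) ∩ V_i = Ψ_i(μ) ∪ (block-i part of Ψ₀(μ))` where
`Ψ_i(μ) = ρ(X_i,V_i)(μ_{X_i})` and `Ψ₀(μ) = ψ(X₀,V[μ])(μ_{X₀}) ⊆ V[μ] ≅ range (∑ b)`. -/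
def PsiMapT (m d : ℕ) (n a : ℕ → ℕ) (μ : ℕ → Multiset ℕ) : ℕ → Finset ℕ :=
  fun i =>
    if i < m then
      rhoMap (a i) (μ (i + 1)) ∪
        ((psiMap ((∑ t ∈ Finset.range m, (a t - Multiset.card (μ (t + 1)))) -
              ((∑ t ∈ Finset.range m, a t) - d)) (μ 0) ∩
            Finset.Ico (offF (fun t => a t - Multiset.card (μ (t + 1))) i)
              (offF (fun t => a t - Multiset.card (μ (t + 1))) i +
                (a i - Multiset.card (μ (i + 1))))).image
          (fun j => j - offF (fun t => a t - Multiset.card (μ (t + 1))) i))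
    else ∅

/-- The block-`i` part of `up(τ)`. -/
def upT (a n : ℕ → ℕ) (τ : ℕ → Finset ℕ) (i : ℕ) : Finset ℕ :=
  if (τ i).card = a i then
    (τ i).filter (fun j => ∃ g ∈ Finset.range (n i) \ τ i, g < j) else ∅

/-- The block-`i` part of `tail(τ)`. -/
def tailT (m : ℕ) (a n : ℕ → ℕ) (τ : ℕ → Finset ℕ) (i : ℕ) : Finset ℕ :=
  (τ i).filter (fun j => ∃ i₀, i₀ < m ∧ (τ i₀).card < a i₀ ∧
    (∀ t, t < i₀ → (τ t).card = a t) ∧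
    (i₀ < i ∨ (i₀ = i ∧ ∃ g, g < j ∧ g ∉ τ i ∧ g < n i)))

/-- Revlex order on the monomials on `X₀ ∪ X_i`, given by the pair (X₀-part, X_i-part):
the variables of `X₀` are listed before (are `≻`-larger than) those of `X_i`, and within a
block a smaller index means an `≻`-larger variable.  `p ≻ q` iff at the `≻`-least variable
where they differ, `p` has the smaller exponent. -/
def MonRevGT2 (p0 p1 q0 q1 : Multiset ℕ) : Prop :=
  (∃ x, p1.count x < q1.count x ∧ ∀ y, x < y → p1.count y = q1.count y) ∨
  (p1 = q1 ∧ ∃ x, p0.count x < q0.count x ∧ ∀ y, x < y → p0.count y = q0.count y)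

/-! ### Tail counts and the revlex order -/

def tailCount (p : Multiset ℕ) (x : ℕ) : ℕ := Multiset.card (p.filter (x ≤ ·))

lemma tailCount_zero (p : Multiset ℕ) : tailCount p 0 = Multiset.card p := by
  simp [tailCount]

lemma tailCount_le_card (p : Multiset ℕ) (x : ℕ) : tailCount p x ≤ Multiset.card p :=
  Multiset.card_le_card (Multiset.filter_le _ _)

lemma tailCount_add (p q : Multiset ℕ) (x : ℕ) :
    tailCount (p + q) x = tailCount p x + tailCount q x := by
  simp [tailCount]

lemma tailCount_cons (a : ℕ) (p : Multiset ℕ) (x : ℕ) :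
    tailCount (a ::ₘ p) x = tailCount p x + if x ≤ a then 1 else 0 := by
  simp only [tailCount, Multiset.filter_cons, Multiset.card_add]
  split_ifs <;> simp [add_comm]

lemma tailCount_eq_count_add (p : Multiset ℕ) (x : ℕ) :
    tailCount p x = p.count x + tailCount p (x + 1) := by
  induction p using Multiset.induction with
  | empty => simp [tailCount]
  | cons a s ih =>
    rw [tailCount_cons, tailCount_cons, Multiset.count_cons, ih]
    split_ifs <;> omega

lemma tailCount_congr {p q : Multiset ℕ} {x : ℕ} (h : ∀ y, x ≤ y → p.count y = q.count y) :
    tailCount p x = tailCount q x := by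
  unfold tailCount
  congr 1
  ext a
  simp only [Multiset.count_filter]
  split_ifs with ha
  exacts [h a ha, rfl]

lemma count_eq_zero_of_sum_lt {p : Multiset ℕ} {y : ℕ} (hy : p.sum < y) : p.count y = 0 :=
  Multiset.count_eq_zero.2 fun hmem => (Multiset.le_sum_of_mem hmem).not_gt hy

def RevlexGT (p q : Multiset ℕ) : Prop :=
  ∃ x, p.count x < q.count x ∧ ∀ y, x < y → p.count y = q.count y

/-- Tail domination forces `p ⪰ q`: at the largest index where `p` and `q` differ, their tail
counts above agree, so domination there decides the comparison. -/
lemma eq_or_revlexGT_of_tailCount_le {p q : Multiset ℕ} (h : ∀ x, tailCount p x ≤ tailCount q x) :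
    p = q ∨ RevlexGT p q := by
  classical
  have hex : ∃ x, ∀ y, x ≤ y → p.count y = q.count y :=
    ⟨p.sum + q.sum + 1, fun y hy => by
      rw [count_eq_zero_of_sum_lt (by omega), count_eq_zero_of_sum_lt (by omega)]⟩
  rcases Nat.eq_zero_or_pos (Nat.find hex) with h0 | hpos
  · left
    ext y
    exact Nat.find_spec hex y (by omega)
  · right
    have habove : ∀ y, Nat.find hex - 1 < y → p.count y = q.count y :=
      fun y hy => Nat.find_spec hex y (by omega)
    have hne : p.count (Nat.find hex - 1) ≠ q.count (Nat.find hex - 1) := fun heq =>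
      Nat.find_min hex (by omega : Nat.find hex - 1 < Nat.find hex) fun y hy => by
        rcases hy.eq_or_lt with rfl | hy
        exacts [heq, habove y hy]
    have hx := h (Nat.find hex - 1)
    rw [tailCount_eq_count_add p, tailCount_eq_count_add q,
      tailCount_congr fun y hy => habove y (by omega)] at hx
    exact ⟨_, by omega, habove⟩

/-- `ν` consists of the `k` largest elements of `μ`, added greedily. -/
lemma exists_le_tailCount_eq_min (μ : Multiset ℕ) {k : ℕ} (hk : k ≤ Multiset.card μ) :
    ∃ ν ≤ μ, ∀ x, tailCount ν x = min k (tailCount μ x) := by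
  induction k with
  | zero => exact ⟨0, Multiset.zero_le μ, fun x => by simp [tailCount]⟩
  | succ k ih =>
    obtain ⟨ν, hνμ, hν⟩ := ih (by omega)
    have hνcard : Multiset.card ν = k := by
      have := hν 0
      rw [tailCount_zero, tailCount_zero] at this
      omega
    have hsplit : ∀ x, tailCount μ x = tailCount ν x + tailCount (μ - ν) x := fun x => by
      rw [← tailCount_add, add_tsub_cancel_of_le hνμ]
    have hne : (μ - ν).toFinset.Nonempty := by
      have := hsplit 0
      rw [tailCount_zero, tailCount_zero, tailCount_zero] at this
      exact Multiset.toFinset_nonempty.2 (Multiset.card_pos.1 (by omega))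
    set z := (μ - ν).toFinset.max' hne
    have hz : z ∈ μ - ν := Multiset.mem_toFinset.1 (max'_mem _ hne)
    refine ⟨z ::ₘ ν, ?_, fun x => ?_⟩
    · calc z ::ₘ ν = ν + {z} := by rw [add_comm]; rfl
        _ ≤ ν + (μ - ν) := add_le_add_right (Multiset.singleton_le.2 hz) ν
        _ = μ := add_tsub_cancel_of_le hνμ
    rw [tailCount_cons, hsplit x]
    have hx := hν x
    split_ifs with hxz
    · have : 0 < tailCount (μ - ν) x :=
        Multiset.card_pos_iff_exists_mem.2 ⟨z, Multiset.mem_filter.2 ⟨hz, hxz⟩⟩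
      rw [hsplit] at hx
      omega
    · have : tailCount (μ - ν) x = 0 := Multiset.card_eq_zero.2 <| Multiset.filter_eq_nil.2
        fun y hy hxy => hxz (hxy.trans (le_max' _ _ (Multiset.mem_toFinset.2 hy)))
      rw [hsplit] at hx
      omega

lemma exists_divisor_monRevGT2 {μ₀ μ₁ μ'₀ μ'₁ : Multiset ℕ}
    (hcard : Multiset.card μ'₀ + Multiset.card μ'₁ ≤ Multiset.card μ₀ + Multiset.card μ₁)
    (h₁ : ∀ x, tailCount μ'₁ x ≤ tailCount μ₁ x)
    (h₀ : μ'₁ = μ₁ → ∀ x, tailCount μ'₀ x ≤ tailCount μ₀ x) :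
    ∃ ν₀ ν₁ : Multiset ℕ, ν₀ ≤ μ₀ ∧ ν₁ ≤ μ₁ ∧
      Multiset.card ν₀ + Multiset.card ν₁ = Multiset.card μ'₀ + Multiset.card μ'₁ ∧
      ((μ'₀ = ν₀ ∧ μ'₁ = ν₁) ∨ MonRevGT2 μ'₀ μ'₁ ν₀ ν₁) := by
  set k := Multiset.card μ'₀ + Multiset.card μ'₁
  have hμ'₁ : Multiset.card μ'₁ ≤ Multiset.card μ₁ := by simpa [tailCount_zero] using h₁ 0
  obtain ⟨ν₁, hν₁μ, hν₁⟩ := exists_le_tailCount_eq_min μ₁ (min_le_left _ k)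
  obtain ⟨ν₀, hν₀μ, hν₀⟩ :=
    exists_le_tailCount_eq_min μ₀ (k := k - min (Multiset.card μ₁) k) (by omega)
  have hcardν₁ := hν₁ 0
  have hcardν₀ := hν₀ 0
  simp only [tailCount_zero] at hcardν₀ hcardν₁
  refine ⟨ν₀, ν₁, hν₀μ, hν₁μ, by omega, ?_⟩
  have hle₁ : ∀ x, tailCount μ'₁ x ≤ tailCount ν₁ x := fun x => by
    have := tailCount_le_card μ'₁ x
    rw [hν₁ x]
    exact le_min (by omega) (h₁ x)
  rcases eq_or_revlexGT_of_tailCount_le hle₁ with rfl | hgt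
  · have hle₀ : ∀ x, tailCount μ'₀ x ≤ tailCount ν₀ x := fun x => by
      have := tailCount_le_card μ'₀ x
      rw [hν₀ x]
      refine le_min (by omega) ?_
      -- either `ν₁` is all of `μ₁`, or it already has degree `k` and `μ'₀ = 0`
      by_cases hall : Multiset.card μ₁ ≤ k
      · have hν₁eq : μ'₁ = μ₁ := Multiset.eq_of_le_of_card_le hν₁μ (by omega)
        exact h₀ hν₁eq x
      · omega
    rcases eq_or_revlexGT_of_tailCount_le hle₀ with rfl | hgt₀
    · exact Or.inl ⟨rfl, rfl⟩
    · exact Or.inr (Or.inr ⟨rfl, hgt₀⟩)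
  · exact Or.inr (Or.inl hgt)

/-! ### Gap counts and the map `φ` -/

def gapCount (F : Finset ℕ) (v : ℕ) : ℕ := #(range v \ F)

def gapTail (F : Finset ℕ) (x : ℕ) : ℕ := #{v ∈ F | x ≤ gapCount F v}

def firstGap (F : Finset ℕ) : ℕ := Nat.find (Infinite.exists_notMem_finset F)

lemma firstGap_notMem (F : Finset ℕ) : firstGap F ∉ F :=
  Nat.find_spec (Infinite.exists_notMem_finset F)

lemma range_firstGap_subset (F : Finset ℕ) : range (firstGap F) ⊆ F := fun _ hv =>
  not_not.1 (Nat.find_min (Infinite.exists_notMem_finset F) (mem_range.1 hv))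

lemma firstGap_le_of_notMem {F : Finset ℕ} {w : ℕ} (hw : w ∉ F) : firstGap F ≤ w :=
  Nat.find_min' _ hw

lemma le_firstGap_of_range_subset {F : Finset ℕ} {t : ℕ} (h : range t ⊆ F) : t ≤ firstGap F :=
  not_lt.1 fun hlt => firstGap_notMem F (h (mem_range.2 hlt))

lemma firstGap_eq {F : Finset ℕ} {y : ℕ} (h₁ : range y ⊆ F) (h₂ : y ∉ F) : firstGap F = y :=
  le_antisymm (firstGap_le_of_notMem h₂) (le_firstGap_of_range_subset h₁)

lemma gapCount_eq_zero_iff {F : Finset ℕ} {v : ℕ} : gapCount F v = 0 ↔ range v ⊆ F := by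
  rw [gapCount, card_eq_zero, sdiff_eq_empty_iff_subset]

lemma gapCount_mono (F : Finset ℕ) : Monotone (gapCount F) := fun _ _ h =>
  card_le_card (sdiff_subset_sdiff (range_subset_range.2 h) le_rfl)

lemma gapCount_erase {s : Finset ℕ} {j : ℕ} (hj : j ∈ s) (g : ℕ) :
    gapCount (s.erase j) g = gapCount s g + if j < g then 1 else 0 := by
  unfold gapCount
  split_ifs with hjg
  · rw [sdiff_erase (mem_range.2 hjg), card_insert_of_notMem (by simp [hj])]
  · rw [← sdiff_insert_of_notMem (by simpa using hjg), insert_erase hj, add_zero]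

lemma gapCount_insert {s : Finset ℕ} {j : ℕ} (hj : j ∉ s) (g : ℕ) :
    gapCount s g = gapCount (insert j s) g + if j < g then 1 else 0 := by
  have := gapCount_erase (mem_insert_self j s) g
  rwa [erase_insert hj] at this

lemma card_filter_lt_sort_getElem (F : Finset ℕ) {i : ℕ} (hi : i < (F.sort (· ≤ ·)).length) :
    #{x ∈ F | x < (F.sort (· ≤ ·))[i]} = i := by
  set l := F.sort (· ≤ ·)
  have hl : l.SortedLT := sortedLT_sort F
  have htake : {x ∈ F | x < l[i]} = (l.take i).toFinset := by
    ext x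
    rw [mem_filter, List.mem_toFinset, List.mem_take_iff_getElem, ← mem_sort (· ≤ ·)]
    constructor
    · rintro ⟨hx, hxi⟩
      obtain ⟨j, hj, rfl⟩ := List.getElem_of_mem hx
      exact ⟨j, lt_min (hl.getElem_lt_getElem_iff.1 hxi) hj, rfl⟩
    · rintro ⟨j, hj, rfl⟩
      exact ⟨List.getElem_mem _, hl.getElem_lt_getElem_iff.2 (by omega)⟩
  rw [htake, List.toFinset_card_of_nodup ((sort_nodup _ _).sublist (List.take_sublist _ _)),
    List.length_take]
  omega

lemma gapCount_sort_getElem (F : Finset ℕ) {i : ℕ} (hi : i < (F.sort (· ≤ ·)).length) :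
    gapCount F (F.sort (· ≤ ·))[i] = (F.sort (· ≤ ·))[i] - i := by
  set v := (F.sort (· ≤ ·))[i]
  have hsub : {x ∈ F | x < v} ⊆ range v := fun x hx => mem_range.2 (mem_filter.1 hx).2
  have hsd : range v \ F = range v \ {x ∈ F | x < v} := by
    ext x
    simp only [mem_sdiff, mem_range, mem_filter]
    tauto
  rw [gapCount, hsd, card_sdiff_of_subset hsub, card_range, card_filter_lt_sort_getElem F hi]

lemma phiMap_eq_filter_map_gapCount (F : Finset ℕ) :
    phiMap F = (F.val.map (gapCount F)).filter (· ≠ 0) := by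
  have key : ((F.sort (· ≤ ·)).zipIdx.map Prod.swap).map (fun p => p.2 - p.1) =
      (F.sort (· ≤ ·)).map (gapCount F) := by
    refine List.ext_getElem (by simp) fun i h₁ h₂ => ?_
    simp only [List.getElem_map, List.getElem_zipIdx, Prod.swap, zero_add]
    rw [gapCount_sort_getElem F (by simpa using h₂)]
  rw [phiMap, key, ← sort_eq F (· ≤ ·), Multiset.map_coe, Multiset.filter_coe]

lemma tailCount_phiMap (F : Finset ℕ) (x : ℕ) :
    tailCount (phiMap F) x = gapTail F (max x 1) := by
  rw [phiMap_eq_filter_map_gapCount, tailCount, Multiset.filter_filter, Multiset.filter_map,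
    Multiset.card_map, gapTail, card_def, filter_val]
  congr 1
  exact Multiset.filter_congr fun v _ => by simp only [Function.comp_apply]; omega

lemma card_phiMap_add_firstGap (F : Finset ℕ) : Multiset.card (phiMap F) + firstGap F = #F := by
  have hinit : {v ∈ F | ¬ 1 ≤ gapCount F v} = range (firstGap F) := by
    ext v
    simp only [mem_filter, not_le, Nat.lt_one_iff, gapCount_eq_zero_iff, mem_range]
    constructor
    · rintro ⟨hv, hsub⟩
      by_contra! hge
      have : range (v + 1) ⊆ F := by
        rw [range_add_one]
        exact insert_subset hv hsub
      exact firstGap_notMem F (this (mem_range.2 (by omega)))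
    · intro hv
      exact ⟨range_firstGap_subset F (mem_range.2 hv),
        (range_subset_range.2 hv.le).trans (range_firstGap_subset F)⟩
  rw [← tailCount_zero, tailCount_phiMap, ← card_range (firstGap F), ← hinit, gapTail,
    max_eq_right (Nat.zero_le 1), card_filter_add_card_filter_not]

/-- Match `w` with `x`: the gap count of `w` after the move is its count in `F`, at most that of
`x`, and no other gap count grows. -/
lemma gapTail_swap_le {F : Finset ℕ} {x w : ℕ} (hx : x ∈ F) (hw : w ∉ F) (hwx : w < x) (y : ℕ) :
    gapTail (insert w (F.erase x)) y ≤ gapTail F y := by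
  have hw' : w ∉ F.erase x := fun h => hw (mem_of_mem_erase h)
  have hgap : ∀ v, gapCount (insert w (F.erase x)) v + (if w < v then 1 else 0) =
      gapCount F v + if x < v then 1 else 0 := fun v => by
    rw [← gapCount_insert hw', gapCount_erase hx]
  refine card_le_card_of_injOn (fun v => if v = w then x else v) (fun v hv => ?_) ?_
  · simp only [coe_filter, Set.mem_ofPred_eq, mem_insert, mem_erase] at hv ⊢
    obtain ⟨hv | ⟨hvx, hvF⟩, hyv⟩ := hv
    · subst hv
      have := hgap v
      simp only [lt_irrefl, if_true, if_false, show ¬ x < v from by omega] at this ⊢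
      exact ⟨hx, hyv.trans (this.le.trans (gapCount_mono F hwx.le))⟩
    · have := hgap v
      rw [if_neg (by rintro rfl; exact hw hvF)]
      exact ⟨hvF, hyv.trans (by split_ifs at this <;> omega)⟩
  · intro v₁ hv₁ v₂ hv₂ heq
    simp only [coe_filter, Set.mem_ofPred_eq, mem_insert, mem_erase] at hv₁ hv₂ heq
    split_ifs at heq <;> grind

lemma gapTail_insert_le {F : Finset ℕ} {w y : ℕ} (hw : range w ⊆ F) (hy : 1 ≤ y) :
    gapTail (insert w F) y ≤ gapTail F y := by
  refine card_le_card fun v hv => ?_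
  obtain ⟨hv, hyv⟩ := mem_filter.1 hv
  have hvw : v ≠ w := by
    rintro rfl
    have : gapCount (insert v F) v = 0 := gapCount_eq_zero_iff.2 (hw.trans (subset_insert _ _))
    omega
  exact mem_filter.2 ⟨(mem_insert.1 hv).resolve_left hvw,
    hyv.trans (card_le_card (sdiff_subset_sdiff le_rfl (subset_insert _ _)))⟩

lemma firstGap_le_firstGap_swap {F : Finset ℕ} {x w : ℕ} (hw : w ∉ F) (hwx : w < x) :
    firstGap F ≤ firstGap (insert w (F.erase x)) := by
  have := firstGap_le_of_notMem hw
  refine le_firstGap_of_range_subset fun z hz => mem_insert_of_mem (mem_erase.2 ⟨?_, ?_⟩)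
  · have := mem_range.1 hz
    omega
  · exact range_firstGap_subset F hz

/-! ### Fills -/

lemma mem_take_sort_iff (D : Finset ℕ) (t x : ℕ) :
    x ∈ (D.sort (· ≤ ·)).take t ↔ x ∈ D ∧ #{y ∈ D | y < x} < t := by
  rw [List.mem_take_iff_getElem]
  constructor
  · rintro ⟨j, hj, rfl⟩
    exact ⟨(mem_sort _).1 (List.getElem_mem _),
      by rw [card_filter_lt_sort_getElem D (by omega)]; omega⟩
  · rintro ⟨hx, hlt⟩
    obtain ⟨j, hj, rfl⟩ := List.getElem_of_mem ((mem_sort (· ≤ ·)).2 hx)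
    rw [card_filter_lt_sort_getElem D hj] at hlt
    exact ⟨j, lt_min hlt hj, rfl⟩

lemma fillF_eq_union_filter (s : Finset ℕ) (k N : ℕ) :
    fillF s k N = s ∪ {g ∈ range N | g ∉ s ∧ gapCount s g < k - #s} := by
  have hgaps : ∀ x < N, {y ∈ range N \ s | y < x} = range x \ s := fun x hx => by
    ext y
    simp only [mem_filter, mem_sdiff, mem_range]
    constructor
    · exact fun ⟨⟨_, hy⟩, hyx⟩ => ⟨hyx, hy⟩
    · exact fun ⟨hyx, hy⟩ => ⟨⟨by omega, hy⟩, hyx⟩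
  ext x
  rw [fillF, mem_union, mem_union, List.mem_toFinset, mem_take_sort_iff, mem_filter, mem_sdiff,
    mem_range]
  refine or_congr_right ⟨fun ⟨⟨hxN, hxs⟩, hlt⟩ => ⟨hxN, hxs, ?_⟩,
    fun ⟨hxN, hxs, hlt⟩ => ⟨⟨hxN, hxs⟩, ?_⟩⟩
  · rwa [hgaps x hxN] at hlt
  · rwa [hgaps x hxN]

lemma subset_fillF (s : Finset ℕ) (k N : ℕ) : s ⊆ fillF s k N :=
  subset_union_left

lemma fillF_subset_range {s : Finset ℕ} (k : ℕ) {N : ℕ} (hs : s ⊆ range N) :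
    fillF s k N ⊆ range N := by
  rw [fillF_eq_union_filter]
  exact union_subset hs (filter_subset _ _)

lemma mem_fillF_iff {s : Finset ℕ} {k N g : ℕ} (hg : g < N) :
    g ∈ fillF s k N ↔ g ∈ s ∨ gapCount s g < k - #s := by
  rw [fillF_eq_union_filter, mem_union, mem_filter, mem_range]
  tauto

lemma card_fillF {s : Finset ℕ} {k N : ℕ} (hs : s ⊆ range N) (hsk : #s ≤ k) (hkN : k ≤ N) :
    #(fillF s k N) = k := by
  have hdisj : Disjoint s (((range N \ s).sort (· ≤ ·)).take (k - #s)).toFinset :=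
    disjoint_right.2 fun x hx =>
      (mem_sdiff.1 ((mem_sort _).1 (List.mem_of_mem_take (List.mem_toFinset.1 hx)))).2
  rw [fillF, card_union_of_disjoint hdisj,
    List.toFinset_card_of_nodup ((sort_nodup _ _).sublist (List.take_sublist _ _)),
    List.length_take, length_sort, card_sdiff_of_subset hs, card_range]
  omega

lemma fillF_of_card_eq {s : Finset ℕ} {k N : ℕ} (h : #s = k) : fillF s k N = s := by
  simp [fillF, h]

lemma gapCount_le_of_forall_mem_fillF {s : Finset ℕ} {k N v : ℕ} (hs : s ⊆ range N)
    (hsk : #s ≤ k) (hkN : k ≤ N) (h : ∀ z < v, z ∉ s → z ∈ fillF s k N) :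
    gapCount s v ≤ k - #s := by
  have hsub : range v \ s ⊆ fillF s k N \ s := fun z hz => by
    obtain ⟨hz, hzs⟩ := mem_sdiff.1 hz
    exact mem_sdiff.2 ⟨h z (mem_range.1 hz) hzs, hzs⟩
  have := card_le_card hsub
  rwa [card_sdiff_of_subset (subset_fillF s k N), card_fillF hs hsk hkN] at this

lemma eq_of_forall_lt_mem_iff {A B : Finset ℕ} {N : ℕ} (hA : A ⊆ range N) (hB : B ⊆ range N)
    (h : ∀ g < N, g ∈ A ↔ g ∈ B) : A = B := by
  ext g
  by_cases hg : g < N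
  · exact h g hg
  · exact iff_of_false (fun h => hg (mem_range.1 (hA h))) (fun h => hg (mem_range.1 (hB h)))

lemma fillF_insert_of_range_subset {s : Finset ℕ} {k N j : ℕ} (hs : s ⊆ range N)
    (hsk : #s < k) (hjN : j < N) (hjs : j ∉ s) (hj : range j ⊆ s) :
    fillF (insert j s) k N = fillF s k N := by
  refine eq_of_forall_lt_mem_iff (fillF_subset_range k (insert_subset (mem_range.2 hjN) hs))
    (fillF_subset_range k hs) fun g hg => ?_
  rw [mem_fillF_iff hg, mem_fillF_iff hg, mem_insert, card_insert_of_notMem hjs]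
  have hins := gapCount_insert hjs g
  rcases lt_trichotomy g j with hgj | rfl | hgj
  · simp [hj (mem_range.2 hgj)]
  · simp only [true_or, gapCount_eq_zero_iff.2 hj, true_iff]
    omega
  · rw [if_pos hgj] at hins
    simp only [hgj.ne', false_or]
    exact or_congr_right (by omega)

lemma gapCount_succ_of_notMem {s : Finset ℕ} {u : ℕ} (hu : u ∉ s) :
    gapCount s (u + 1) = gapCount s u + 1 := by
  rw [gapCount, range_add_one, insert_sdiff_of_notMem _ hu, card_insert_of_notMem (by simp)]
  rfl

lemma mem_fillF_erase_iff {s : Finset ℕ} {k N jv g : ℕ} (hjv : jv ∈ s) (hsk : #s ≤ k)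
    (hg : g < N) : g ∈ fillF (s.erase jv) k N ↔
      (g ≠ jv ∧ g ∈ s) ∨ gapCount s g + (if jv < g then 1 else 0) ≤ k - #s := by
  have := card_pos.2 ⟨jv, hjv⟩
  rw [mem_fillF_iff hg, mem_erase, card_erase_of_mem hjv, gapCount_erase hjv]
  exact or_congr_right (by omega)

/-- The slot freed by `jv` is refilled by `jv` itself. -/
lemma fillF_erase_of_lt_firstGap {s : Finset ℕ} {k N jv : ℕ} (hs : s ⊆ range N) (hsk : #s ≤ k)
    (hkN : k ≤ N) (hjv : jv ∈ s) (hlt : jv < firstGap (fillF s k N)) :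
    fillF (s.erase jv) k N = fillF s k N := by
  have hbelow : ∀ z < jv, z ∈ fillF s k N := fun z hz =>
    range_firstGap_subset _ (mem_range.2 (hz.trans hlt))
  refine eq_of_forall_lt_mem_iff (fillF_subset_range k ((erase_subset _ _).trans hs))
    (fillF_subset_range k hs) fun g hg => ?_
  rw [mem_fillF_erase_iff hjv hsk hg, mem_fillF_iff hg]
  rcases lt_trichotomy g jv with hgj | rfl | hgj
  · have := (mem_fillF_iff hg).1 (hbelow g hgj)
    rw [if_neg (by omega)]
    constructor
    · rintro (⟨-, h⟩ | h)
      exacts [Or.inl h, this.imp id (by omega)]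
    · rintro (h | h)
      exacts [Or.inl ⟨hgj.ne, h⟩, Or.inr (by omega)]
  · have := gapCount_le_of_forall_mem_fillF hs hsk hkN fun z hz _ => hbelow z hz
    simp only [hjv, lt_irrefl, if_false, true_or, iff_true]
    omega
  · simp only [if_pos hgj, hgj.ne', ne_eq, not_false_eq_true, true_and]
    exact or_congr_right (by omega)

lemma fillF_erase_of_firstGap_lt {s : Finset ℕ} {k N jv : ℕ} (hs : s ⊆ range N)
    (hsk : #s ≤ k) (hkN : k ≤ N) (hjv : jv ∈ s) (hlt : firstGap (fillF s k N) < jv) :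
    fillF (s.erase jv) k N =
      insert (firstGap (fillF s k N)) ((fillF s k N).erase jv) := by
  set u := firstGap (fillF s k N)
  have hjN := mem_range.1 (hs hjv)
  have huF := firstGap_notMem (fillF s k N)
  have hus : u ∉ s := fun h => huF (subset_fillF s k N h)
  have hgap_u : gapCount s u = k - #s := by
    have : gapCount s u ≤ k - #s := gapCount_le_of_forall_mem_fillF hs hsk hkN fun z hz _ =>
      range_firstGap_subset _ (mem_range.2 hz)
    have : ¬(u ∈ s ∨ gapCount s u < k - #s) := (mem_fillF_iff (lt_trans hlt hjN)).not.1 huF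
    omega
  have hgap_above : ∀ g, u < g → k - #s + 1 ≤ gapCount s g := fun g hg => by
    have := gapCount_mono s (Nat.succ_le_of_lt hg)
    rw [gapCount_succ_of_notMem hus] at this
    omega
  refine eq_of_forall_lt_mem_iff (fillF_subset_range k ((erase_subset _ _).trans hs))
    (insert_subset (mem_range.2 (by omega)) ((erase_subset _ _).trans (fillF_subset_range k hs)))
    fun g hg => ?_
  rw [mem_fillF_erase_iff hjv hsk hg, mem_insert, mem_erase, mem_fillF_iff hg]
  rcases lt_trichotomy g u with hgu | rfl | hgu
  · have := (mem_fillF_iff hg).1 (range_firstGap_subset _ (mem_range.2 hgu))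
    rw [if_neg (by omega)]
    constructor
    · rintro (⟨-, h⟩ | h)
      exacts [Or.inr ⟨by omega, Or.inl h⟩, Or.inr ⟨by omega, this.imp id (by omega)⟩]
    · rintro (h | ⟨-, h | h⟩)
      exacts [absurd h hgu.ne, Or.inl ⟨by omega, h⟩, Or.inr (by omega)]
  · simp only [hus, and_false, false_or, true_or, iff_true]
    rw [if_neg (by omega)]
    omega
  · have := hgap_above g hgu
    simp only [hgu.ne', false_or]
    constructor
    · rintro (⟨hne, h⟩ | h)
      exacts [⟨hne, Or.inl h⟩, by split_ifs at h <;> omega]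
    · rintro ⟨hne, h | h⟩
      exacts [Or.inl ⟨hne, h⟩, by omega]

lemma fillF_erase_eq_or {s : Finset ℕ} {k N jv : ℕ} (hs : s ⊆ range N) (hsk : #s ≤ k)
    (hkN : k ≤ N) (hjv : jv ∈ s) :
    fillF (s.erase jv) k N = fillF s k N ∨
      ∃ w < jv, w ∉ fillF s k N ∧ fillF (s.erase jv) k N = insert w ((fillF s k N).erase jv) := by
  have hne : firstGap (fillF s k N) ≠ jv := fun h =>
    firstGap_notMem (fillF s k N) (by rw [h]; exact subset_fillF s k N hjv)
  rcases lt_or_gt_of_ne hne with hlt | hlt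
  · exact Or.inr ⟨_, hlt, firstGap_notMem _, fillF_erase_of_firstGap_lt hs hsk hkN hjv hlt⟩
  · exact Or.inl (fillF_erase_of_lt_firstGap hs hsk hkN hjv hlt)

/-! ### The set `τ ∩ V[τ]` -/

lemma offF_succ (b : ℕ → ℕ) (i : ℕ) : offF b (i + 1) = offF b i + b i :=
  sum_range_succ b i

lemma offF_mono (b : ℕ → ℕ) : Monotone (offF b) := fun _ _ h =>
  sum_le_sum_of_subset (range_subset_range.2 h)

lemma offF_congr {b b' : ℕ → ℕ} {i : ℕ} (h : ∀ t < i, b t = b' t) : offF b i = offF b' i :=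
  sum_congr rfl fun t ht => h t (mem_range.1 ht)

lemma offF_add_lt_offF {b : ℕ → ℕ} {t t' j : ℕ} (hj : j < b t) (htt' : t < t') :
    offF b t + j < offF b t' := by
  have := offF_mono b (Nat.succ_le_of_lt htt')
  rw [offF_succ] at this
  omega

lemma offF_add_inj {b : ℕ → ℕ} {t t' j j' : ℕ} (hj : j < b t) (hj' : j' < b t')
    (h : offF b t + j = offF b t' + j') : t = t' ∧ j = j' := by
  rcases lt_trichotomy t t' with htt' | rfl | htt'
  · have := offF_add_lt_offF hj htt'
    omega
  · omega
  · have := offF_add_lt_offF hj' htt'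
    omega

lemma mem_globF {m : ℕ} {b : ℕ → ℕ} {τ : ℕ → Finset ℕ} {x : ℕ} :
    x ∈ globF m b τ ↔ ∃ t < m, ∃ j ∈ τ t, j < b t ∧ offF b t + j = x := by
  simp only [globF, mem_biUnion, mem_image, mem_range, mem_inter, and_assoc]

lemma offF_add_mem_globF_iff {m : ℕ} {b : ℕ → ℕ} {τ : ℕ → Finset ℕ} {t j : ℕ} (ht : t < m)
    (hj : j < b t) : offF b t + j ∈ globF m b τ ↔ j ∈ τ t := by
  refine ⟨fun h => ?_, fun h => mem_globF.2 ⟨t, ht, j, h, hj, rfl⟩⟩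
  obtain ⟨t', -, j', hj'τ, hj', he⟩ := mem_globF.1 h
  obtain ⟨rfl, rfl⟩ := offF_add_inj hj' hj he
  exact hj'τ

lemma card_globF (m : ℕ) (b : ℕ → ℕ) (τ : ℕ → Finset ℕ) :
    #(globF m b τ) = ∑ t ∈ range m, #(τ t ∩ range (b t)) := by
  rw [globF, card_biUnion]
  · exact sum_congr rfl fun t _ => card_image_of_injective _ (add_right_injective _)
  · intro t _ t' _ htt'
    refine disjoint_left.2 fun x hx hx' => htt' ?_
    obtain ⟨j, hj, rfl⟩ := mem_image.1 hx
    obtain ⟨j', hj', he⟩ := mem_image.1 hx'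
    exact (offF_add_inj (mem_range.1 (mem_inter.1 hj).2) (mem_range.1 (mem_inter.1 hj').2)
      he.symm).1

lemma card_inter_range_le {s s' u : Finset ℕ} {c c' : ℕ} (hs : s' ⊆ s ∪ u) (hc : c ≤ c') :
    #(s' ∩ range c') ≤ #(s ∩ range c) + (c' - c) + #u := by
  have hsub : s' ∩ range c' ⊆ (s ∩ range c ∪ (range c' \ range c)) ∪ u := fun x hx => by
    obtain ⟨hxs, hxc⟩ := mem_inter.1 hx
    rcases mem_union.1 (hs hxs) with hx | hx
    · by_cases hxc' : x < c
      · exact mem_union_left _ (mem_union_left _ (mem_inter.2 ⟨hx, mem_range.2 hxc'⟩))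
      · exact mem_union_left _ (mem_union_right _ (mem_sdiff.2 ⟨hxc, by simpa using hxc'⟩))
    · exact mem_union_right _ hx
  calc #(s' ∩ range c') ≤ #(s ∩ range c ∪ (range c' \ range c)) + #u :=
        (card_le_card hsub).trans (card_union_le _ _)
    _ ≤ #(s ∩ range c) + (c' - c) + #u := by
        gcongr
        refine (card_union_le _ _).trans ?_
        rw [card_sdiff_of_subset (range_subset_range.2 hc), card_range, card_range]

lemma card_globF_le {m : ℕ} {b b' c : ℕ → ℕ} {τ τ' : ℕ → Finset ℕ}
    (h : ∀ t < m, #(τ' t ∩ range (b' t)) ≤ #(τ t ∩ range (b t)) + c t) :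
    #(globF m b' τ') ≤ #(globF m b τ) + ∑ t ∈ range m, c t := by
  rw [card_globF, card_globF, ← sum_add_distrib]
  exact sum_le_sum fun t ht => h t (mem_range.1 ht)

lemma range_offF_add_subset_globF {m : ℕ} {b : ℕ → ℕ} {τ : ℕ → Finset ℕ} {p c : ℕ} (hp : p < m)
    (hfull : ∀ t < p, range (b t) ⊆ τ t) (hc : range c ⊆ τ p) (hcb : c ≤ b p) :
    range (offF b p + c) ⊆ globF m b τ := by
  induction p generalizing c with
  | zero =>
    intro u hu
    rw [offF, range_zero, sum_empty, zero_add, mem_range] at hu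
    have := (offF_add_mem_globF_iff (τ := τ) hp (by omega : u < b 0)).2 (hc (mem_range.2 hu))
    rwa [offF, range_zero, sum_empty, zero_add] at this
  | succ p ih =>
    intro u hu
    rw [mem_range] at hu
    by_cases hup : u < offF b (p + 1)
    · rw [offF_succ] at hup
      exact ih (by omega) (fun t ht => hfull t (by omega)) (hfull p (by omega)) le_rfl
        (mem_range.2 hup)
    · have := (offF_add_mem_globF_iff (τ := τ) hp (by omega : u - offF b (p + 1) < b (p + 1))).2
        (hc (mem_range.2 (by omega)))
      rwa [Nat.add_sub_cancel' (by omega)] at this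

lemma firstGap_globF {m : ℕ} {b : ℕ → ℕ} {τ : ℕ → Finset ℕ} {p j : ℕ} (hp : p < m)
    (hfull : ∀ t < p, range (b t) ⊆ τ t) (hj : range j ⊆ τ p) (hjb : j < b p) (hjτ : j ∉ τ p) :
    firstGap (globF m b τ) = offF b p + j :=
  firstGap_eq (range_offF_add_subset_globF hp hfull hj hjb.le)
    ((offF_add_mem_globF_iff hp hjb).not.2 hjτ)

lemma globF_congr {m : ℕ} {b : ℕ → ℕ} {τ τ' : ℕ → Finset ℕ}
    (h : ∀ t < m, τ t ∩ range (b t) = τ' t ∩ range (b t)) : globF m b τ = globF m b τ' :=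
  biUnion_congr rfl fun t ht => by rw [h t (mem_range.1 ht)]

lemma globF_update_insert {m : ℕ} {b : ℕ → ℕ} {τ : ℕ → Finset ℕ} {p j : ℕ} (hp : p < m)
    (hj : j < b p) :
    globF m b (Function.update τ p (insert j (τ p))) = insert (offF b p + j) (globF m b τ) := by
  ext x
  rw [mem_insert]
  constructor
  · intro hx
    obtain ⟨t, ht, i, hi, hib, rfl⟩ := mem_globF.1 hx
    rcases eq_or_ne t p with rfl | htp
    · rw [Function.update_self, mem_insert] at hi
      exact hi.imp (congrArg _) (offF_add_mem_globF_iff ht hib).2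
    · rw [Function.update_of_ne htp] at hi
      exact Or.inr ((offF_add_mem_globF_iff ht hib).2 hi)
  · rintro (rfl | hx)
    · exact (offF_add_mem_globF_iff hp hj).2 (by simp)
    · obtain ⟨t, ht, i, hi, hib, rfl⟩ := mem_globF.1 hx
      refine (offF_add_mem_globF_iff ht hib).2 ?_
      rcases eq_or_ne t p with rfl | htp
      · simp [hi]
      · rwa [Function.update_of_ne htp]

lemma globF_update_erase {m : ℕ} {b : ℕ → ℕ} {τ : ℕ → Finset ℕ} {p j : ℕ} (hj : j < b p) :
    globF m b (Function.update τ p ((τ p).erase j)) = (globF m b τ).erase (offF b p + j) := by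
  ext x
  rw [mem_erase]
  constructor
  · intro hx
    obtain ⟨t, ht, i, hi, hib, rfl⟩ := mem_globF.1 hx
    rcases eq_or_ne t p with rfl | htp
    · rw [Function.update_self, mem_erase] at hi
      exact ⟨by omega, (offF_add_mem_globF_iff ht hib).2 hi.2⟩
    · rw [Function.update_of_ne htp] at hi
      exact ⟨fun h => htp (offF_add_inj hib hj h).1, (offF_add_mem_globF_iff ht hib).2 hi⟩
  · rintro ⟨hne, hx⟩
    obtain ⟨t, ht, i, hi, hib, rfl⟩ := mem_globF.1 hx
    refine (offF_add_mem_globF_iff ht hib).2 ?_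
    rcases eq_or_ne t p with rfl | htp
    · simp only [Function.update_self, mem_erase]
      exact ⟨by omega, hi⟩
    · rwa [Function.update_of_ne htp]

lemma offF_eq_add_of_lt {b b' : ℕ → ℕ} {p i : ℕ} (hb : ∀ t ≠ p, b' t = b t) (hpb : b p ≤ b' p)
    (hi : p < i) : offF b' i = offF b i + (b' p - b p) := by
  induction i, hi using Nat.le_induction with
  | base =>
    rw [offF_succ, offF_succ, offF_congr fun t ht => hb t (by omega)]
    omega
  | succ i hi ih =>
    rw [offF_succ, offF_succ, ih, hb i (by omega)]
    omega

/-- Widening window `p` from `b p` to `b' p` and filling the new room cannot shorten the initial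
segment: the part below window `p + 1` is kept, the rest is shifted up by the widening. -/
lemma firstGap_globF_le_of_widen {m : ℕ} {b b' : ℕ → ℕ} {τ τ' : ℕ → Finset ℕ} {p : ℕ}
    (hp : p < m) (hb : ∀ t ≠ p, b' t = b t) (hpb : b p ≤ b' p)
    (hτ : ∀ t < m, τ t ∩ range (b t) ⊆ τ' t) (hfill : range (b' p) ⊆ τ' p) :
    firstGap (globF m b τ) ≤ firstGap (globF m b' τ') := by
  have hbb : ∀ t, b t ≤ b' t := fun t => by
    rcases eq_or_ne t p with rfl | htp
    exacts [hpb, (hb t htp).ge]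
  have hmem : ∀ t < m, ∀ i ∈ τ t, i < b t → offF b' t + i ∈ globF m b' τ' :=
    fun t ht i hi hib => (offF_add_mem_globF_iff ht (hib.trans_le (hbb t))).2
      (hτ t ht (mem_inter.2 ⟨hi, mem_range.2 hib⟩))
  have hG : ∀ u < firstGap (globF m b τ), u ∈ globF m b τ := fun u hu =>
    range_firstGap_subset _ (mem_range.2 hu)
  refine le_firstGap_of_range_subset fun u hu => ?_
  rw [mem_range] at hu
  have hsucc := offF_succ b p
  by_cases hlow : u < offF b (p + 1)
  · obtain ⟨t, ht, i, hi, hib, rfl⟩ := mem_globF.1 (hG u hu)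
    have htp : t ≤ p := not_lt.1 fun hpt => by
      have : offF b (p + 1) ≤ offF b t := offF_mono b hpt
      omega
    rw [← offF_congr fun r hr => hb r (by omega)]
    exact hmem t ht i hi hib
  by_cases hmid : u < offF b p + b' p
  · have := (offF_add_mem_globF_iff (τ := τ') hp (by omega : u - offF b p < b' p)).2
      (hfill (mem_range.2 (by omega)))
    rwa [offF_congr (fun r hr => hb r (by omega)), Nat.add_sub_cancel' (by omega)] at this
  · obtain ⟨t, ht, i, hi, hib, hti⟩ := mem_globF.1 (hG (u - (b' p - b p)) (by omega))
    have hpt : p < t := not_le.1 fun htp => by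
      rcases htp.lt_or_eq with htp | rfl
      · have := offF_add_lt_offF hib htp
        omega
      · omega
    have := hmem t ht i hi hib
    rwa [offF_eq_add_of_lt hb hpb hpt, add_right_comm, hti, Nat.sub_add_cancel (by omega)] at this

/-! ### The swap `bk(τ,γ)` -/

/-- `fl(τ,t)`. -/
def fillBlock (a n : ℕ → ℕ) (τ : ℕ → Finset ℕ) (t : ℕ) : Finset ℕ := fillF (τ t) (a t) (n t)

structure IsBlockFamily (m : ℕ) (n a : ℕ → ℕ) (τ : ℕ → Finset ℕ) : Prop where
  subset_range : ∀ t < m, τ t ⊆ range (n t)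
  card_le : ∀ t < m, #(τ t) ≤ a t
  le : ∀ t < m, a t ≤ n t

namespace IsBlockFamily

variable {m : ℕ} {n a : ℕ → ℕ} {τ : ℕ → Finset ℕ} {t : ℕ}

lemma card_phiBlock_add_firstGap (hτ : IsBlockFamily m n a τ) (ht : t < m) :
    Multiset.card (PhiBlock a n τ t) + firstGap (fillBlock a n τ t) = a t := by
  rw [PhiBlock, fillBlock, card_phiMap_add_firstGap,
    card_fillF (hτ.subset_range t ht) (hτ.card_le t ht) (hτ.le t ht)]

lemma bfun_eq (hτ : IsBlockFamily m n a τ) (ht : t < m) :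
    bfun a n τ t = firstGap (fillBlock a n τ t) := by
  have := hτ.card_phiBlock_add_firstGap ht
  rw [bfun]
  omega

lemma range_bfun_subset (hτ : IsBlockFamily m n a τ) (ht : t < m) (hfull : #(τ t) = a t) :
    range (bfun a n τ t) ⊆ τ t := by
  rw [hτ.bfun_eq ht, fillBlock, fillF_of_card_eq hfull]
  exact range_firstGap_subset _

lemma lt_bfun (hτ : IsBlockFamily m n a τ) (ht : t < m) (hcard : #(τ t) < a t) {j : ℕ}
    (hjN : j < n t) (hj : range j ⊆ τ t) : j < bfun a n τ t := by
  rw [hτ.bfun_eq ht]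
  refine le_firstGap_of_range_subset fun z hz => ?_
  rcases Nat.lt_succ_iff_lt_or_eq.1 (mem_range.1 hz) with hzj | rfl
  · exact subset_fillF _ _ _ (hj (mem_range.2 hzj))
  · rw [fillBlock, mem_fillF_iff hjN, gapCount_eq_zero_iff.2 hj]
    omega

end IsBlockFamily

/-- `bk(τ,γ) = (τ - v) ∪ w` for `v = (iv, jv)` and `w = (i₀, j₀)`. -/
def swapT (τ : ℕ → Finset ℕ) (iv jv i₀ j₀ : ℕ) : ℕ → Finset ℕ :=
  fun t => (if t = i₀ then insert j₀ else id) (if t = iv then (τ t).erase jv else τ t)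

lemma swapT_of_ne {τ : ℕ → Finset ℕ} {iv jv i₀ j₀ t : ℕ} (h₁ : t ≠ iv) (h₂ : t ≠ i₀) :
    swapT τ iv jv i₀ j₀ t = τ t := by
  simp [swapT, h₁, h₂]

lemma swapT_eq_update (τ : ℕ → Finset ℕ) (iv jv i₀ j₀ : ℕ) :
    swapT τ iv jv i₀ j₀ =
      Function.update (Function.update τ iv ((τ iv).erase jv)) i₀
        (insert j₀ (Function.update τ iv ((τ iv).erase jv) i₀)) := by
  funext t
  simp only [swapT, Function.update_apply]
  split_ifs <;> simp_all

lemma swapT_subset {τ : ℕ → Finset ℕ} {iv jv i₀ j₀ : ℕ} (t : ℕ) :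
    swapT τ iv jv i₀ j₀ t ⊆ τ t ∪ if t = i₀ then {j₀} else ∅ := fun x hx => by
  simp only [swapT] at hx
  split_ifs at hx ⊢ <;> simp_all only [id, mem_insert, mem_erase, mem_union, mem_singleton] <;>
    tauto

/-- Hypotheses shared by the `up` and the `tail` case of `bk(τ,γ)`. -/
structure IsSwap (m : ℕ) (n a : ℕ → ℕ) (τ : ℕ → Finset ℕ) (iv jv i₀ j₀ : ℕ) : Prop where
  iv_lt : iv < m
  i₀_le : i₀ ≤ iv
  jv_mem : jv ∈ τ iv
  j₀_lt : j₀ < n i₀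
  j₀_notMem : j₀ ∉ τ i₀
  range_subset : range j₀ ⊆ τ i₀
  j₀_lt_jv : i₀ = iv → j₀ < jv
  card_lt : i₀ ≠ iv → #(τ i₀) < a i₀

lemma phiMapT_zero (m : ℕ) (a n : ℕ → ℕ) (τ : ℕ → Finset ℕ) :
    PhiMapT m a n τ 0 = phiMap (globF m (bfun a n τ) τ) := by
  simp [PhiMapT]

lemma phiMapT_succ {m : ℕ} (a n : ℕ → ℕ) (τ : ℕ → Finset ℕ) {i : ℕ} (hi : i < m) :
    PhiMapT m a n τ (i + 1) = PhiBlock a n τ i := by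
  simp [PhiMapT, Nat.succ_le_of_lt hi]

namespace IsSwap

variable {m : ℕ} {n a : ℕ → ℕ} {τ : ℕ → Finset ℕ} {iv jv i₀ j₀ t : ℕ}

lemma isBlockFamily_swapT (hs : IsSwap m n a τ iv jv i₀ j₀) (hτ : IsBlockFamily m n a τ) :
    IsBlockFamily m n a (swapT τ iv jv i₀ j₀) := by
  have hcard : ∀ t < m, #(swapT τ iv jv i₀ j₀ t) ≤ a t ∧
      swapT τ iv jv i₀ j₀ t ⊆ range (n t) := fun t ht => by
    have := hτ.card_le t ht
    have hsub := hτ.subset_range t ht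
    by_cases h₀ : t = i₀ <;> by_cases hv : t = iv
    · subst h₀ hv
      have h₁ := card_erase_of_mem hs.jv_mem
      have h₂ := card_insert_le j₀ ((τ t).erase jv)
      have h₃ := card_pos.2 ⟨jv, hs.jv_mem⟩
      simp only [swapT, if_true]
      exact ⟨by omega, insert_subset (mem_range.2 hs.j₀_lt) ((erase_subset _ _).trans hsub)⟩
    · subst h₀
      have := hs.card_lt hv
      have := card_insert_le j₀ (τ t)
      simp only [swapT, if_true, hv, if_false]
      exact ⟨by omega, insert_subset (mem_range.2 hs.j₀_lt) hsub⟩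
    · subst hv
      simp only [swapT, h₀, if_true, if_false]
      exact ⟨(card_erase_le).trans this, (erase_subset _ _).trans hsub⟩
    · rw [swapT_of_ne hv h₀]
      exact ⟨this, hsub⟩
  exact ⟨fun t ht => (hcard t ht).2, fun t ht => (hcard t ht).1, hτ.le⟩

lemma fillBlock_swapT_of_ne (hs : IsSwap m n a τ iv jv i₀ j₀) (hτ : IsBlockFamily m n a τ)
    (ht : t ≠ iv) : fillBlock a n (swapT τ iv jv i₀ j₀) t = fillBlock a n τ t := by
  by_cases h₀ : t = i₀
  · subst h₀
    have hi₀ : t < m := lt_of_le_of_lt hs.i₀_le hs.iv_lt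
    simp only [fillBlock, swapT, ht, if_true, if_false]
    exact fillF_insert_of_range_subset (hτ.subset_range t hi₀) (hs.card_lt ht) hs.j₀_lt
      hs.j₀_notMem hs.range_subset
  · rw [fillBlock, fillBlock, swapT_of_ne ht h₀]

lemma bfun_swapT_of_ne (hs : IsSwap m n a τ iv jv i₀ j₀) (hτ : IsBlockFamily m n a τ)
    (ht : t ≠ iv) : bfun a n (swapT τ iv jv i₀ j₀) t = bfun a n τ t := by
  change a t - Multiset.card (phiMap (fillBlock a n _ t)) =
    a t - Multiset.card (phiMap (fillBlock a n τ t))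
  rw [hs.fillBlock_swapT_of_ne hτ ht]

lemma card_swapT_of_eq (hs : IsSwap m n a τ iv jv i₀ j₀) (h₀ : i₀ = iv) :
    #(swapT τ iv jv i₀ j₀ iv) = #(τ iv) := by
  subst h₀
  have hj₀ : j₀ ∉ (τ i₀).erase jv := fun h => hs.j₀_notMem (mem_of_mem_erase h)
  have := card_pos.2 ⟨jv, hs.jv_mem⟩
  simp only [swapT, if_true]
  rw [card_insert_of_notMem hj₀, card_erase_of_mem hs.jv_mem]
  omega

lemma fillBlock_swapT_eq_or (hs : IsSwap m n a τ iv jv i₀ j₀) (hτ : IsBlockFamily m n a τ) :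
    fillBlock a n (swapT τ iv jv i₀ j₀) iv = fillBlock a n τ iv ∨
      ∃ w < jv, w ∉ fillBlock a n τ iv ∧ fillBlock a n (swapT τ iv jv i₀ j₀) iv =
        insert w ((fillBlock a n τ iv).erase jv) := by
  have hsub := hτ.subset_range iv hs.iv_lt
  have hcard := hτ.card_le iv hs.iv_lt
  have hle := hτ.le iv hs.iv_lt
  by_cases h₀ : i₀ = iv
  · subst h₀
    have hlt := hs.j₀_lt_jv rfl
    have hj₀ : j₀ ∉ (τ i₀).erase jv := fun h => hs.j₀_notMem (mem_of_mem_erase h)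
    have hcard' := hs.card_swapT_of_eq rfl
    simp only [fillBlock, swapT, if_true] at hcard' ⊢
    rcases hcard.lt_or_eq with hcard | hfull
    · rw [fillF_insert_of_range_subset ((erase_subset _ _).trans hsub)
        ((card_erase_le).trans_lt hcard) hs.j₀_lt hj₀ fun z hz => mem_erase.2
          ⟨by have := mem_range.1 hz; omega, hs.range_subset hz⟩]
      exact fillF_erase_eq_or hsub hcard.le hle hs.jv_mem
    · rw [fillF_of_card_eq hfull, fillF_of_card_eq (hcard'.trans hfull)]
      exact Or.inr ⟨j₀, hlt, hs.j₀_notMem, rfl⟩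
  · simp only [fillBlock, swapT, if_true, Ne.symm h₀, if_false]
    exact fillF_erase_eq_or hsub hcard hle hs.jv_mem

lemma bfun_le_bfun_swapT (hs : IsSwap m n a τ iv jv i₀ j₀) (hτ : IsBlockFamily m n a τ) :
    bfun a n τ iv ≤ bfun a n (swapT τ iv jv i₀ j₀) iv := by
  rw [hτ.bfun_eq hs.iv_lt, (hs.isBlockFamily_swapT hτ).bfun_eq hs.iv_lt]
  rcases hs.fillBlock_swapT_eq_or hτ with h | ⟨w, hw, hwF, h⟩
  · rw [h]
  · rw [h]
    exact firstGap_le_firstGap_swap hwF hw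

lemma tailCount_phiBlock_swapT_le (hs : IsSwap m n a τ iv jv i₀ j₀) (hτ : IsBlockFamily m n a τ)
    (x : ℕ) : tailCount (PhiBlock a n (swapT τ iv jv i₀ j₀) iv) x ≤
      tailCount (PhiBlock a n τ iv) x := by
  change tailCount (phiMap (fillBlock a n _ iv)) x ≤ tailCount (phiMap (fillBlock a n τ iv)) x
  rw [tailCount_phiMap, tailCount_phiMap]
  rcases hs.fillBlock_swapT_eq_or hτ with h | ⟨w, hw, hwF, h⟩
  · rw [h]
  · rw [h]
    exact gapTail_swap_le (subset_fillF _ _ _ hs.jv_mem) hwF hw _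

lemma sum_bfun_swapT_sub (hs : IsSwap m n a τ iv jv i₀ j₀) (hτ : IsBlockFamily m n a τ) :
    ∑ t ∈ range m, (bfun a n (swapT τ iv jv i₀ j₀) t - bfun a n τ t) =
      bfun a n (swapT τ iv jv i₀ j₀) iv - bfun a n τ iv :=
  sum_eq_single_of_mem iv (mem_range.2 hs.iv_lt) fun t _ ht => by
    rw [hs.bfun_swapT_of_ne hτ ht, Nat.sub_self]

lemma range_succ_subset_swapT (hs : IsSwap m n a τ iv jv i₀ j₀) :
    range (j₀ + 1) ⊆ swapT τ iv jv i₀ j₀ i₀ := fun z hz => by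
  simp only [swapT, if_true]
  rcases Nat.lt_succ_iff_lt_or_eq.1 (mem_range.1 hz) with hz | rfl
  · refine mem_insert_of_mem ?_
    split_ifs with h₀
    · exact mem_erase.2 ⟨by have := hs.j₀_lt_jv h₀; omega, h₀ ▸ hs.range_subset (mem_range.2 hz)⟩
    · exact hs.range_subset (mem_range.2 hz)
  · exact mem_insert_self _ _

lemma bfun_lt_bfun_swapT_of_up (hs : IsSwap m n a τ iv jv i₀ j₀) (hτ : IsBlockFamily m n a τ)
    (hup : i₀ = iv) (hfull : #(τ iv) = a iv) :
    bfun a n τ iv < bfun a n (swapT τ iv jv i₀ j₀) iv := by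
  have hfull' := (hs.card_swapT_of_eq hup).trans hfull
  rw [hτ.bfun_eq hs.iv_lt, (hs.isBlockFamily_swapT hτ).bfun_eq hs.iv_lt, fillBlock, fillBlock,
    fillF_of_card_eq hfull, fillF_of_card_eq hfull']
  subst hup
  rw [firstGap_eq hs.range_subset hs.j₀_notMem]
  exact le_firstGap_of_range_subset hs.range_succ_subset_swapT

/-- In the `up` case block `iv` stays full, so window `iv` is just widened and filled. -/
lemma card_globF_swapT_add_firstGap_le_of_up (hs : IsSwap m n a τ iv jv i₀ j₀)
    (hτ : IsBlockFamily m n a τ) (hup : i₀ = iv) (hfull : #(τ iv) = a iv) :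
    #(globF m (bfun a n (swapT τ iv jv i₀ j₀)) (swapT τ iv jv i₀ j₀)) +
        firstGap (globF m (bfun a n τ) τ) ≤
      #(globF m (bfun a n τ) τ) + (bfun a n (swapT τ iv jv i₀ j₀) iv - bfun a n τ iv) +
        firstGap (globF m (bfun a n (swapT τ iv jv i₀ j₀)) (swapT τ iv jv i₀ j₀)) := by
  have hiv := hs.iv_lt
  have hlt := hs.bfun_lt_bfun_swapT_of_up hτ hup hfull
  have hrange' := (hs.isBlockFamily_swapT hτ).range_bfun_subset hiv
    ((hs.card_swapT_of_eq hup).trans hfull)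
  have hbt : ∀ t ≠ iv, bfun a n (swapT τ iv jv i₀ j₀) t = bfun a n τ t :=
    fun t ht => hs.bfun_swapT_of_ne hτ ht
  have hsum := hs.sum_bfun_swapT_sub hτ
  have hother : ∀ t ≠ iv, swapT τ iv jv i₀ j₀ t = τ t := fun t ht => swapT_of_ne ht (hup ▸ ht)
  generalize swapT τ iv jv i₀ j₀ = τ' at *
  have hcard := card_globF_le (m := m) (b := bfun a n τ) (b' := bfun a n τ') (τ := τ) (τ' := τ')
    (c := fun t => bfun a n τ' t - bfun a n τ t) fun t ht => by
      rcases eq_or_ne t iv with rfl | htv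
      · rw [inter_eq_right.2 hrange', inter_eq_right.2 (hτ.range_bfun_subset hiv hfull),
          card_range, card_range]
        omega
      · rw [hother t htv, hbt t htv]
        omega
  have hfirst := firstGap_globF_le_of_widen (τ := τ) (τ' := τ') hiv hbt hlt.le (fun t _ => by
      rcases eq_or_ne t iv with rfl | htv
      · exact inter_subset_right.trans ((range_subset_range.2 hlt.le).trans hrange')
      · rw [hother t htv]
        exact inter_subset_left) hrange'
  rw [hsum] at hcard
  omega

lemma j₀_lt_bfun_of_tail (hs : IsSwap m n a τ iv jv i₀ j₀) (hτ : IsBlockFamily m n a τ)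
    (htail : #(τ i₀) < a i₀) :
    j₀ < bfun a n τ i₀ :=
  hτ.lt_bfun (lt_of_le_of_lt hs.i₀_le hs.iv_lt) htail hs.j₀_lt hs.range_subset

/-- In the `tail` case `w` is the first gap of `τ ∩ V[τ]`, and it gets filled. -/
lemma card_globF_swapT_add_firstGap_le_of_tail (hs : IsSwap m n a τ iv jv i₀ j₀)
    (hτ : IsBlockFamily m n a τ) (htail : #(τ i₀) < a i₀) (hfull : ∀ t < i₀, #(τ t) = a t) :
    #(globF m (bfun a n (swapT τ iv jv i₀ j₀)) (swapT τ iv jv i₀ j₀)) +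
        firstGap (globF m (bfun a n τ) τ) ≤
      #(globF m (bfun a n τ) τ) + (bfun a n (swapT τ iv jv i₀ j₀) iv - bfun a n τ iv) +
        firstGap (globF m (bfun a n (swapT τ iv jv i₀ j₀)) (swapT τ iv jv i₀ j₀)) := by
  have hi₀iv := hs.i₀_le
  have hi₀ : i₀ < m := lt_of_le_of_lt hi₀iv hs.iv_lt
  have hj₀b := hs.j₀_lt_bfun_of_tail hτ htail
  have hrange : ∀ t < i₀, range (bfun a n τ t) ⊆ τ t := fun t ht =>
    hτ.range_bfun_subset (by omega) (hfull t ht)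
  have hbt : ∀ t ≠ iv, bfun a n (swapT τ iv jv i₀ j₀) t = bfun a n τ t :=
    fun t ht => hs.bfun_swapT_of_ne hτ ht
  have hbb : ∀ t, bfun a n τ t ≤ bfun a n (swapT τ iv jv i₀ j₀) t := fun t => by
    rcases eq_or_ne t iv with rfl | htv
    exacts [hs.bfun_le_bfun_swapT hτ, (hbt t htv).ge]
  have hsum := hs.sum_bfun_swapT_sub hτ
  have hsub := swapT_subset (τ := τ) (iv := iv) (jv := jv) (i₀ := i₀) (j₀ := j₀)
  have hlow : ∀ t < i₀, swapT τ iv jv i₀ j₀ t = τ t := fun t ht => swapT_of_ne (by omega) (by omega)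
  have hsucc := hs.range_succ_subset_swapT
  generalize swapT τ iv jv i₀ j₀ = τ' at *
  have hcard := card_globF_le (m := m) (b := bfun a n τ) (b' := bfun a n τ') (τ := τ) (τ' := τ')
    (c := fun t => (bfun a n τ' t - bfun a n τ t) + if t = i₀ then 1 else 0) fun t _ => by
      have := card_inter_range_le (hsub t) (hbb t)
      split_ifs at this ⊢ <;> simpa [add_assoc] using this
  rw [sum_add_distrib, hsum, sum_ite_eq' (range m) i₀ (fun _ => 1), if_pos (mem_range.2 hi₀)]
    at hcard
  have hfirst : firstGap (globF m (bfun a n τ) τ) = offF (bfun a n τ) i₀ + j₀ :=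
    firstGap_globF hi₀ hrange hs.range_subset hj₀b hs.j₀_notMem
  have hfirst' : offF (bfun a n τ) i₀ + (j₀ + 1) ≤ firstGap (globF m (bfun a n τ') τ') := by
    refine le_firstGap_of_range_subset ?_
    rw [offF_congr fun t ht => (hbt t (by omega)).symm]
    have hrange' : ∀ t < i₀, range (bfun a n τ' t) ⊆ τ' t := fun t ht => by
      rw [hlow t ht, hbt t (by omega)]
      exact hrange t ht
    exact range_offF_add_subset_globF hi₀ hrange' hsucc (hj₀b.trans_le (hbb i₀))
  omega

/-- If window `iv` keeps its width, `τ ∩ V[τ]` changes by moving `v` (if it lies in its window)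
down to the first gap `w`, or by just adding `w`. -/
lemma gapTail_globF_swapT_le_of_tail (hs : IsSwap m n a τ iv jv i₀ j₀)
    (hτ : IsBlockFamily m n a τ) (htail : #(τ i₀) < a i₀) (hfull : ∀ t < i₀, #(τ t) = a t)
    (hb : bfun a n (swapT τ iv jv i₀ j₀) iv = bfun a n τ iv) {x : ℕ} (hx : 1 ≤ x) :
    gapTail (globF m (bfun a n (swapT τ iv jv i₀ j₀)) (swapT τ iv jv i₀ j₀)) x ≤
      gapTail (globF m (bfun a n τ) τ) x := by
  have hi₀iv := hs.i₀_le
  have hi₀ : i₀ < m := lt_of_le_of_lt hi₀iv hs.iv_lt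
  have hj₀b := hs.j₀_lt_bfun_of_tail hτ htail
  have hbeq : bfun a n (swapT τ iv jv i₀ j₀) = bfun a n τ := funext fun t => by
    rcases eq_or_ne t iv with rfl | htv
    exacts [hb, hs.bfun_swapT_of_ne hτ htv]
  set b := bfun a n τ
  set G := globF m b τ
  have hfirst : firstGap G = offF b i₀ + j₀ := firstGap_globF hi₀
    (fun t ht => hτ.range_bfun_subset (by omega) (hfull t ht)) hs.range_subset hj₀b
    hs.j₀_notMem
  have hyG : offF b i₀ + j₀ ∉ G := hfirst ▸ firstGap_notMem G
  rw [hbeq, swapT_eq_update, globF_update_insert hi₀ hj₀b]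
  by_cases hjv : jv < b iv
  · rw [globF_update_erase hjv]
    refine gapTail_swap_le ((offF_add_mem_globF_iff hs.iv_lt hjv).2 hs.jv_mem) hyG ?_ x
    rcases hi₀iv.lt_or_eq with hlt | heq
    · exact (offF_add_lt_offF hj₀b hlt).trans_le (Nat.le_add_right _ _)
    · subst heq
      have := hs.j₀_lt_jv rfl
      omega
  · have hσ : globF m b (Function.update τ iv ((τ iv).erase jv)) = G :=
      globF_congr fun t _ => by
        rcases eq_or_ne t iv with rfl | htv
        · rw [Function.update_self, erase_inter,
            erase_eq_of_notMem fun h => hjv (mem_range.1 (mem_inter.1 h).2)]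
        · rw [Function.update_of_ne htv]
    rw [hσ]
    exact gapTail_insert_le (hfirst ▸ range_firstGap_subset G) hx

theorem phiMapT_swapT (hs : IsSwap m n a τ iv jv i₀ j₀) (hτ : IsBlockFamily m n a τ)
    (hcase : (i₀ = iv ∧ #(τ iv) = a iv) ∨ (#(τ i₀) < a i₀ ∧ ∀ t < i₀, #(τ t) = a t)) :
    Multiset.card (PhiMapT m a n (swapT τ iv jv i₀ j₀) 0) +
        Multiset.card (PhiMapT m a n (swapT τ iv jv i₀ j₀) (iv + 1)) ≤
      Multiset.card (PhiMapT m a n τ 0) + Multiset.card (PhiMapT m a n τ (iv + 1)) ∧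
    (∀ x, tailCount (PhiMapT m a n (swapT τ iv jv i₀ j₀) (iv + 1)) x ≤
      tailCount (PhiMapT m a n τ (iv + 1)) x) ∧
    (PhiMapT m a n (swapT τ iv jv i₀ j₀) (iv + 1) = PhiMapT m a n τ (iv + 1) →
      ∀ x, tailCount (PhiMapT m a n (swapT τ iv jv i₀ j₀) 0) x ≤
        tailCount (PhiMapT m a n τ 0) x) := by
  have hτ' := hs.isBlockFamily_swapT hτ
  have hiv := hs.iv_lt
  simp only [phiMapT_zero, phiMapT_succ _ _ _ hiv]
  have hF := hτ.card_phiBlock_add_firstGap hiv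
  have hF' := hτ'.card_phiBlock_add_firstGap hiv
  rw [← hτ.bfun_eq hiv] at hF
  rw [← hτ'.bfun_eq hiv] at hF'
  have hG := card_phiMap_add_firstGap (globF m (bfun a n τ) τ)
  have hG' := card_phiMap_add_firstGap
    (globF m (bfun a n (swapT τ iv jv i₀ j₀)) (swapT τ iv jv i₀ j₀))
  have hle := hs.bfun_le_bfun_swapT hτ
  have hglob := hcase.elim
    (fun ⟨hup, hfull⟩ => hs.card_globF_swapT_add_firstGap_le_of_up hτ hup hfull)
    (fun ⟨htail, hfull⟩ => hs.card_globF_swapT_add_firstGap_le_of_tail hτ htail hfull)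
  refine ⟨by omega, hs.tailCount_phiBlock_swapT_le hτ, fun heq x => ?_⟩
  have hb : bfun a n (swapT τ iv jv i₀ j₀) iv = bfun a n τ iv := by
    have := congrArg Multiset.card heq
    omega
  rw [tailCount_phiMap, tailCount_phiMap]
  rcases hcase with ⟨hup, hfull⟩ | ⟨htail, hfull⟩
  · exact absurd hb (hs.bfun_lt_bfun_swapT_of_up hτ hup hfull).ne'
  · exact hs.gapTail_globF_swapT_le_of_tail hτ htail hfull hb (le_max_right _ _)

end IsSwap

lemma isSwap_of_mem_tailT {m : ℕ} {n a : ℕ → ℕ} {τ : ℕ → Finset ℕ} {iv jv i₀ j₀ : ℕ}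
    (hiv : iv < m) (hjv : jv ∈ tailT m a n τ iv) (hcard : #(τ i₀) < a i₀)
    (hfull : ∀ t < i₀, #(τ t) = a t) (hj₀ : j₀ < n i₀) (hj₀τ : j₀ ∉ τ i₀)
    (hleast : ∀ g < j₀, g ∈ τ i₀) : IsSwap m n a τ iv jv i₀ j₀ := by
  obtain ⟨hjv, i₁, -, hcard₁, hfull₁, hpos⟩ := mem_filter.1 hjv
  obtain rfl : i₁ = i₀ := by
    rcases lt_trichotomy i₁ i₀ with h | h | h
    · exact absurd (hfull i₁ h) hcard₁.ne
    · exact h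
    · exact absurd (hfull₁ i₀ h) hcard.ne
  refine ⟨hiv, by omega, hjv, hj₀, hj₀τ, fun g hg => hleast g (mem_range.1 hg), fun h => ?_,
    fun _ => hcard⟩
  obtain ⟨-, g, hg, hgτ, -⟩ := hpos.resolve_left (by omega)
  have : j₀ ≤ g := not_lt.1 fun hgj => hgτ (h ▸ hleast g hgj)
  omega

lemma isSwap_of_mem_upT {m : ℕ} {n a : ℕ → ℕ} {τ : ℕ → Finset ℕ} {iv jv j₀ : ℕ}
    (hiv : iv < m) (hjv : jv ∈ upT a n τ iv) (hj₀ : j₀ < n iv) (hj₀τ : j₀ ∉ τ iv)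
    (hleast : ∀ g < j₀, g ∈ τ iv) : IsSwap m n a τ iv jv iv j₀ ∧ #(τ iv) = a iv := by
  rw [upT] at hjv
  split_ifs at hjv with hfull
  · obtain ⟨hjv, g, hg, hgjv⟩ := mem_filter.1 hjv
    have : j₀ ≤ g := not_lt.1 fun hgj => (mem_sdiff.1 hg).2 (hleast g hgj)
    exact ⟨⟨hiv, le_rfl, hjv, hj₀, hj₀τ, fun g hg => hleast g (mem_range.1 hg),
      fun _ => by omega, fun h => absurd rfl h⟩, hfull⟩
  · exact absurd hjv (notMem_empty jv)

theorem stmt16_general (m d : ℕ) (n a : ℕ → ℕ)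
    (ha : ∀ i, i < m → 0 < a i ∧ a i ≤ n i)
    (τ : ℕ → Finset ℕ) (hτ : IsFacetT m d n a τ)
    (iv jv i₀ j₀ : ℕ) (hiv : iv < m)
    (hswap :
      (jv ∈ tailT m a n τ iv ∧ i₀ < m ∧ (τ i₀).card < a i₀ ∧
        (∀ t, t < i₀ → (τ t).card = a t) ∧ j₀ < n i₀ ∧ j₀ ∉ τ i₀ ∧
        (∀ g, g < j₀ → g ∈ τ i₀)) ∨
      (jv ∈ upT a n τ iv ∧ i₀ = iv ∧ j₀ < n iv ∧ j₀ ∉ τ iv ∧ (∀ g, g < j₀ → g ∈ τ iv)))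
    (τ' : ℕ → Finset ℕ)
    (hτ' : τ' = fun t => (if t = i₀ then insert j₀ else id)
        (if t = iv then (τ t).erase jv else τ t)) :
    Multiset.card (PhiMapT m a n τ' 0) + Multiset.card (PhiMapT m a n τ' (iv + 1))
      ≤ Multiset.card (PhiMapT m a n τ 0) + Multiset.card (PhiMapT m a n τ (iv + 1)) ∧
    ∃ ν₀ ν₁ : Multiset ℕ, ν₀ ≤ PhiMapT m a n τ 0 ∧ ν₁ ≤ PhiMapT m a n τ (iv + 1) ∧
      Multiset.card ν₀ + Multiset.card ν₁
        = Multiset.card (PhiMapT m a n τ' 0) + Multiset.card (PhiMapT m a n τ' (iv + 1)) ∧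
      ((PhiMapT m a n τ' 0 = ν₀ ∧ PhiMapT m a n τ' (iv + 1) = ν₁) ∨
        MonRevGT2 (PhiMapT m a n τ' 0) (PhiMapT m a n τ' (iv + 1)) ν₀ ν₁) := by
  have hblocks : IsBlockFamily m n a τ := ⟨hτ.1, hτ.2.1, fun i hi => (ha i hi).2⟩
  obtain ⟨hs, hcase⟩ : IsSwap m n a τ iv jv i₀ j₀ ∧
      ((i₀ = iv ∧ #(τ iv) = a iv) ∨ (#(τ i₀) < a i₀ ∧ ∀ t < i₀, #(τ t) = a t)) := by
    rcases hswap with ⟨hjv, -, hcard, hfull, hj₀, hj₀τ, hleast⟩ | ⟨hjv, rfl, hj₀, hj₀τ, hleast⟩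
    · exact ⟨isSwap_of_mem_tailT hiv hjv hcard hfull hj₀ hj₀τ hleast, Or.inr ⟨hcard, hfull⟩⟩
    · obtain ⟨hs, hfull⟩ := isSwap_of_mem_upT hiv hjv hj₀ hj₀τ hleast
      exact ⟨hs, Or.inl ⟨rfl, hfull⟩⟩
  subst hτ'
  obtain ⟨hA, hB, hC⟩ := hs.phiMapT_swapT hblocks hcase
  exact ⟨hA, exists_divisor_monRevGT2 hA hB hC⟩

/-- With `τ' = bk(τ,γ)`, `μ = Φ(τ)`, `μ' = Φ(τ')`:
`deg μ'_{X₀∪X_iv} ≤ deg μ_{X₀∪X_iv}`, and there is a divisor `ν` of `μ_{X₀∪X_iv}` with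
`deg ν = deg μ'_{X₀∪X_iv}` and `μ'_{X₀∪X_iv} ⪰ ν` in revlex. -/
theorem stmt16 (m d : ℕ) (n a : ℕ → ℕ)
    (hd1 : 1 ≤ d) (hd2 : d ≤ ∑ i ∈ Finset.range m, a i)
    (ha : ∀ i, i < m → 0 < a i ∧ a i ≤ n i)
    (τ : ℕ → Finset ℕ) (hτ : IsFacetT m d n a τ)
    (iv jv i₀ j₀ : ℕ) (hiv : iv < m)
    (hswap :
      (jv ∈ tailT m a n τ iv ∧ i₀ < m ∧ (τ i₀).card < a i₀ ∧
        (∀ t, t < i₀ → (τ t).card = a t) ∧ j₀ < n i₀ ∧ j₀ ∉ τ i₀ ∧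
        (∀ g, g < j₀ → g ∈ τ i₀)) ∨
      (jv ∈ upT a n τ iv ∧ i₀ = iv ∧ j₀ < n iv ∧ j₀ ∉ τ iv ∧ (∀ g, g < j₀ → g ∈ τ iv)))
    (τ' : ℕ → Finset ℕ)
    (hτ' : τ' = fun t => (if t = i₀ then insert j₀ else id)
        (if t = iv then (τ t).erase jv else τ t)) :
    Multiset.card (PhiMapT m a n τ' 0) + Multiset.card (PhiMapT m a n τ' (iv + 1))
      ≤ Multiset.card (PhiMapT m a n τ 0) + Multiset.card (PhiMapT m a n τ (iv + 1)) ∧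
    ∃ ν₀ ν₁ : Multiset ℕ, ν₀ ≤ PhiMapT m a n τ 0 ∧ ν₁ ≤ PhiMapT m a n τ (iv + 1) ∧
      Multiset.card ν₀ + Multiset.card ν₁
        = Multiset.card (PhiMapT m a n τ' 0) + Multiset.card (PhiMapT m a n τ' (iv + 1)) ∧
      ((PhiMapT m a n τ' 0 = ν₀ ∧ PhiMapT m a n τ' (iv + 1) = ν₁) ∨
        MonRevGT2 (PhiMapT m a n τ' 0) (PhiMapT m a n τ' (iv + 1)) ν₀ ν₁) :=
  stmt16_general m d n a ha τ hτ iv jv i₀ j₀ hiv hswap τ' hτ'
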